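/- Let S = {S_1, ..., S_m} and S' = {S'_1, ..., S'_m} be self-similar Jordan zippers in ℝ^n with equal signatures and with equal similarity ratios (Lip S_i = Lip S'_i for all i), whose attractors γ and γ' are arcs of bounded turning. Then the unique homeomorphism f : γ → γ' agreeing with S and S' is bi-Lipschitz: there exists C ≥ 1 with C^{-1}‖x − y‖ ≤ ‖f(x) − f(y)‖ ≤ C‖x − y‖ for all x, y ∈ γ. -/

import Mathlib

open Set Metric

/-- `S i`, for `i < m`, is a contracting similarity with ratio `r i ∈ (0,1)`. -/
def IsSimilaritySystem {X : Type*} [MetricSpace X] (m : ℕ)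
    (S : ℕ → X → X) (r : ℕ → ℝ) : Prop :=
  ∀ i < m, 0 < r i ∧ r i < 1 ∧ ∀ x y, dist (S i x) (S i y) = r i * dist x y

/-- Self-similar zipper with maps `S 0, …, S (m-1)`, ratios `r`, vertices `z 0, …, z m`,
signature `ε` (values in `{0,1}`).  Here `S i` plays the role of the map `S_{i+1}` of the
paper, so the zipper conditions read `S i (z 0) = z (i + ε i)` and
`S i (z m) = z (i + 1 - ε i)`. -/
def IsZipper {X : Type*} [MetricSpace X] (m : ℕ)
    (S : ℕ → X → X) (r : ℕ → ℝ) (z : ℕ → X) (ε : ℕ → ℕ) : Prop :=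
  1 ≤ m ∧ IsSimilaritySystem m S r ∧ (∀ i < m, ε i ≤ 1) ∧
    ∀ i < m, S i (z 0) = z (i + ε i) ∧ S i (z m) = z (i + 1 - ε i)

/-- Linear zipper on `[0,1]`, with vertices `0 = t 0 < t 1 < … < t m = 1`. -/
def IsLinearZipper (m : ℕ) (T : ℕ → ℝ → ℝ) (r : ℕ → ℝ) (t : ℕ → ℝ) (ε : ℕ → ℕ) : Prop :=
  IsZipper m T r t ε ∧ t 0 = 0 ∧ t m = 1 ∧ ∀ i < m, t i < t (i + 1)

/-- `K` is the attractor of the iterated function system `{S i : i < m}`. -/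
def IsAttractor {X : Type*} [MetricSpace X] (m : ℕ) (S : ℕ → X → X) (K : Set X) : Prop :=
  K.Nonempty ∧ IsCompact K ∧ K = ⋃ i ∈ Finset.range m, S i '' K

/-- `g` is a structural parametrization of the zipper `S` (with vertices `z`)
relative to the linear zipper `T` (with vertices `t`). -/
def IsStructuralParam {X : Type*} [MetricSpace X] (m : ℕ) (S : ℕ → X → X)
    (T : ℕ → ℝ → ℝ) (t : ℕ → ℝ) (z : ℕ → X) (g : ℝ → X) : Prop :=
  ContinuousOn g (Icc 0 1) ∧ (∀ i ≤ m, g (t i) = z i) ∧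
    ∀ i < m, ∀ x ∈ Icc (0:ℝ) 1, S i (g x) = g (T i x)

/-- A Jordan zipper: a zipper whose attractor `γ` is a Jordan arc, i.e. some structural
parametrization is injective on `[0,1]` (hence a homeomorphism onto `γ`). -/
def IsJordanZipper {X : Type*} [MetricSpace X] (m : ℕ) (S : ℕ → X → X) (r : ℕ → ℝ)
    (z : ℕ → X) (ε : ℕ → ℕ) (γ : Set X) : Prop :=
  IsZipper m S r z ε ∧ IsAttractor m S γ ∧
    ∃ T rT t g, IsLinearZipper m T rT t ε ∧ IsStructuralParam m S T t z g ∧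
      InjOn g (Icc 0 1) ∧ g '' Icc 0 1 = γ

/-- `g` is an injective continuous parametrization of the arc `γ` by `[0,1]`. -/
def IsArcParam {X : Type*} [MetricSpace X] (γ : Set X) (g : ℝ → X) : Prop :=
  ContinuousOn g (Icc 0 1) ∧ InjOn g (Icc 0 1) ∧ g '' Icc 0 1 = γ

/-- Bounded turning with constant `M`: every subarc `γ_{xy}` (expressed via any
parametrization of the arc) has diameter at most `M‖x - y‖`. -/
def BoundedTurning {X : Type*} [MetricSpace X] (γ : Set X) (M : ℝ) : Prop :=
  0 < M ∧ ∀ g : ℝ → X, IsArcParam γ g →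
    ∀ s ∈ Icc (0:ℝ) 1, ∀ u ∈ Icc (0:ℝ) 1, diam (g '' uIcc s u) ≤ M * dist (g s) (g u)

/-- `f` agrees with the systems `S` and `S'` on `γ`: `f ∘ S i = S' i ∘ f` on `γ`. -/
def Agrees {X Y : Type*} [MetricSpace X] [MetricSpace Y] (m : ℕ)
    (S : ℕ → X → X) (S' : ℕ → Y → Y) (γ : Set X) (f : X → Y) : Prop :=
  ∀ i < m, ∀ x ∈ γ, f (S i x) = S' i (f x)

/-- `f` restricts to a homeomorphism of the compact set `γ` onto `γ'`. -/
def IsHomeoOnto {X Y : Type*} [MetricSpace X] [MetricSpace Y]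
    (γ : Set X) (γ' : Set Y) (f : X → Y) : Prop :=
  ContinuousOn f γ ∧ InjOn f γ ∧ f '' γ = γ'

/-- Composition `S_{i₁} ∘ … ∘ S_{i_k}` along a multi-index (a list). -/
def compS {X : Type*} (S : ℕ → X → X) : List ℕ → X → X
  | [] => id
  | i :: l => S i ∘ compS S l

/-- Product of the ratios along a multi-index. -/
def ratioProd (p : ℕ → ℝ) (l : List ℕ) : ℝ := (l.map p).prod

/-!
Parametrize `γ = g([0,1])` by a structural parametrization `g`, which conjugates the linear
zipper `T` to `S`; then `f ∘ g` parametrizes `γ'` and conjugates `T` to `S'`. Because the ratios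
agree, the subarc diameters `D(s,u) = diam g([s,u])` and `D'(s,u) = diam (f ∘ g)([s,u])` both
scale by `p i` under `T i`, so an inequality `D' ≤ K D` passes from a pair `(x, y)` to
`(T i x, T i y)`. As the `T i` contract, zooming into common children `[t i, t (i+1)]` brings
every pair to one of two base cases: a vertex `t k` lies strictly between the two points, or, if
one point is a vertex, their interval contains a whole child, on which `D ≥ (min p) D(0,1)`
while `D' ≤ D'(0,1)`. The second case bounds `D'/D` for pairs with a vertex endpoint, and
splitting at `t k` then bounds it for all pairs. Bounded turning of `γ` turns this into
`‖f x - f y‖ ≤ D' ≤ K D ≤ K M ‖x - y‖`; the lower bound is symmetric.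
-/

open Bornology

lemma diam_image_of_dist_eq {X Y : Type*} [PseudoMetricSpace X] [PseudoMetricSpace Y]
    {f : X → Y} {c : ℝ} (hc : 0 < c) (hf : ∀ x y, dist (f x) (f y) = c * dist x y)
    {A : Set X} (hA : IsBounded A) : diam (f '' A) = c * diam A := by
  have hfA : IsBounded (f '' A) :=
    (LipschitzWith.of_dist_le_mul (K := ⟨c, hc.le⟩) fun x y => (hf x y).le).isBounded_image hA
  refine le_antisymm (diam_le_of_forall_dist_le (by positivity) ?_) ?_
  · rintro _ ⟨x, hx, rfl⟩ _ ⟨y, hy, rfl⟩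
    rw [hf]
    exact mul_le_mul_of_nonneg_left (dist_le_diam_of_mem hA hx hy) hc.le
  · rw [← le_div_iff₀' hc]
    refine diam_le_of_forall_dist_le (by positivity) fun x hx y hy => ?_
    rw [le_div_iff₀' hc, ← hf]
    exact dist_le_diam_of_mem hfA (mem_image_of_mem f hx) (mem_image_of_mem f hy)

lemma Real.mem_uIcc_iff_dist_add_dist_eq {x y z : ℝ} :
    y ∈ uIcc x z ↔ dist x y + dist y z = dist x z := by
  rw [← segment_eq_uIcc, mem_segment_iff_wbtw, dist_add_dist_eq_iff]

lemma Real.image_uIcc_of_dist_eq {T : ℝ → ℝ} {c : ℝ} (hc : 0 < c)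
    (hT : ∀ x y, dist (T x) (T y) = c * dist x y) (x y : ℝ) :
    T '' uIcc x y = uIcc (T x) (T y) := by
  have hTc : Continuous T :=
    (LipschitzWith.of_dist_le_mul (K := ⟨c, hc.le⟩) fun x y => (hT x y).le).continuous
  refine Subset.antisymm ?_ (intermediate_value_uIcc hTc.continuousOn)
  rintro _ ⟨z, hz, rfl⟩
  rw [Real.mem_uIcc_iff_dist_add_dist_eq] at hz ⊢
  rw [hT, hT, hT, ← mul_add, hz]

noncomputable def arcDiam {X : Type*} [PseudoMetricSpace X] (g : ℝ → X) (s u : ℝ) : ℝ :=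
  diam (g '' uIcc s u)

section arcDiam

variable {X : Type*} [PseudoMetricSpace X] {g : ℝ → X} {s u b s' u' : ℝ}

lemma arcDiam_comm (g : ℝ → X) (s u : ℝ) : arcDiam g s u = arcDiam g u s := by
  rw [arcDiam, arcDiam, uIcc_comm]

lemma arcDiam_self (g : ℝ → X) (s : ℝ) : arcDiam g s s = 0 := by
  simp [arcDiam]

lemma arcDiam_nonneg (g : ℝ → X) (s u : ℝ) : 0 ≤ arcDiam g s u := diam_nonneg

lemma isBounded_image_uIcc (hg : ContinuousOn g (Icc 0 1)) (hs : s ∈ Icc (0:ℝ) 1)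
    (hu : u ∈ Icc (0:ℝ) 1) : IsBounded (g '' uIcc s u) :=
  (isCompact_Icc.image_of_continuousOn hg).isBounded.subset (image_mono (uIcc_subset_Icc hs hu))

lemma dist_le_arcDiam (hg : ContinuousOn g (Icc 0 1)) (hs : s ∈ Icc (0:ℝ) 1)
    (hu : u ∈ Icc (0:ℝ) 1) : dist (g s) (g u) ≤ arcDiam g s u :=
  dist_le_diam_of_mem (isBounded_image_uIcc hg hs hu) (mem_image_of_mem g left_mem_uIcc)
    (mem_image_of_mem g right_mem_uIcc)

lemma arcDiam_mono (hg : ContinuousOn g (Icc 0 1)) (hs' : s' ∈ Icc (0:ℝ) 1)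
    (hu' : u' ∈ Icc (0:ℝ) 1) (h : uIcc s u ⊆ uIcc s' u') : arcDiam g s u ≤ arcDiam g s' u' :=
  diam_mono (image_mono h) (isBounded_image_uIcc hg hs' hu')

lemma arcDiam_le_add (hg : ContinuousOn g (Icc 0 1)) (hs : s ∈ Icc (0:ℝ) 1)
    (hu : u ∈ Icc (0:ℝ) 1) (hb : b ∈ Icc (0:ℝ) 1) :
    arcDiam g s u ≤ arcDiam g s b + arcDiam g b u := by
  have hsub : g '' uIcc s u ⊆ g '' uIcc s b ∪ g '' uIcc b u := by
    rw [← image_union]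
    exact image_mono uIcc_subset_uIcc_union_uIcc
  have hbdd := (isBounded_image_uIcc hg hs hb).union (isBounded_image_uIcc hg hb hu)
  exact (diam_mono hsub hbdd).trans
    (diam_union' ⟨g b, mem_image_of_mem g right_mem_uIcc, mem_image_of_mem g left_mem_uIcc⟩)

end arcDiam

namespace IsLinearZipper

variable {m : ℕ} {T : ℕ → ℝ → ℝ} {r t : ℕ → ℝ} {ε : ℕ → ℕ} (hT : IsLinearZipper m T r t ε)
include hT

lemma strictMonoOn : StrictMonoOn t (Iic m) :=
  strictMonoOn_Iic_of_lt_succ fun i hi => by simpa using hT.2.2.2 i hi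

lemma mem_Icc {k : ℕ} (hk : k ≤ m) : t k ∈ Icc (0:ℝ) 1 := by
  rw [← hT.2.1, ← hT.2.2.1]
  exact ⟨hT.strictMonoOn.monotoneOn (mem_Iic.2 m.zero_le) hk k.zero_le,
    hT.strictMonoOn.monotoneOn hk (mem_Iic.2 le_rfl) hk⟩

lemma dist_apply {i : ℕ} (hi : i < m) (x y : ℝ) : dist (T i x) (T i y) = r i * dist x y :=
  (hT.1.2.1 i hi).2.2 x y

lemma apply_zero_one {i : ℕ} (hi : i < m) :
    T i 0 = t i ∧ T i 1 = t (i + 1) ∨ T i 0 = t (i + 1) ∧ T i 1 = t i := by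
  have h := hT.1.2.2.2 i hi
  rw [hT.2.1, hT.2.2.1] at h
  rcases Nat.le_one_iff_eq_zero_or_eq_one.mp (hT.1.2.2.1 i hi) with he | he <;>
    simp only [he, add_zero, Nat.sub_zero, Nat.add_sub_cancel] at h
  exacts [Or.inl h, Or.inr h]

lemma image_uIcc {i : ℕ} (hi : i < m) (x y : ℝ) : T i '' uIcc x y = uIcc (T i x) (T i y) :=
  Real.image_uIcc_of_dist_eq (hT.1.2.1 i hi).1 (hT.dist_apply hi) x y

lemma image_Icc {i : ℕ} (hi : i < m) : T i '' Icc 0 1 = Icc (t i) (t (i + 1)) := by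
  rw [← uIcc_of_le zero_le_one, hT.image_uIcc hi, ← uIcc_of_lt (hT.2.2.2 i hi)]
  rcases hT.apply_zero_one hi with ⟨h0, h1⟩ | ⟨h0, h1⟩ <;> rw [h0, h1]
  exact uIcc_comm _ _

lemma mem_vertices_of_apply_mem {i : ℕ} (hi : i < m) {x : ℝ} (hx : x ∈ Icc (0:ℝ) 1)
    (h : T i x ∈ t '' Iic m) : x ∈ t '' Iic m := by
  obtain ⟨k, hk, hTk⟩ := h
  have hmono := hT.strictMonoOn
  have hkI : t k ∈ Icc (t i) (t (i + 1)) := hTk ▸ hT.image_Icc hi ▸ mem_image_of_mem (T i) hx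
  have hik : i ≤ k := (hmono.le_iff_le (mem_Iic.2 hi.le) hk).1 hkI.1
  have hki : k ≤ i + 1 := (hmono.le_iff_le hk (mem_Iic.2 hi)).1 hkI.2
  have hinj : Function.Injective (T i) := fun a b hab => by
    have := hT.dist_apply hi a b
    rw [hab, dist_self, eq_comm, mul_eq_zero, dist_eq_zero] at this
    exact this.resolve_left (hT.1.2.1 i hi).1.ne'
  have hTx : T i x = t i ∨ T i x = t (i + 1) := by
    obtain rfl | rfl : k = i ∨ k = i + 1 := by omega
    exacts [.inl hTk.symm, .inr hTk.symm]
  have hx01 : x = 0 ∨ x = 1 := by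
    rcases hT.apply_zero_one hi with ⟨h0, h1⟩ | ⟨h0, h1⟩ <;> rcases hTx with hTx | hTx
    exacts [.inl (hinj (hTx.trans h0.symm)), .inr (hinj (hTx.trans h1.symm)),
      .inr (hinj (hTx.trans h1.symm)), .inl (hinj (hTx.trans h0.symm))]
  rcases hx01 with rfl | rfl
  exacts [⟨0, m.zero_le, hT.2.1⟩, ⟨m, mem_Iic.2 le_rfl, hT.2.2.1⟩]

lemma exists_vertex_between {s u : ℝ} (hs : 0 ≤ s) (hsu : s < u) (hu : u ≤ 1)
    (h : ¬ ∃ i < m, s ∈ Icc (t i) (t (i + 1)) ∧ u ∈ Icc (t i) (t (i + 1))) :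
    ∃ k ≤ m, s < t k ∧ t k < u := by
  classical
  have hex : ∃ k, u ≤ t k := ⟨m, hT.2.2.1 ▸ hu⟩
  have hkm : Nat.find hex ≤ m := Nat.find_min' hex (hT.2.2.1 ▸ hu)
  obtain ⟨j, hj⟩ : ∃ j, Nat.find hex = j + 1 := by
    refine Nat.exists_eq_add_one.2 (Nat.pos_of_ne_zero fun h0 => ?_)
    have := Nat.find_spec hex
    rw [h0, hT.2.1] at this
    linarith
  have hju : t j < u := not_le.1 (Nat.find_min hex (by omega))
  have huj : u ≤ t (j + 1) := hj ▸ Nat.find_spec hex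
  have hsj : s < t j := by
    by_contra! hjs
    exact h ⟨j, by omega, ⟨hjs, by linarith⟩, ⟨hju.le, huj⟩⟩
  exact ⟨j, by omega, hsj, hju⟩

lemma exists_eq_apply_of_mem_Icc {i : ℕ} (hi : i < m) {s u : ℝ}
    (hs : s ∈ Icc (t i) (t (i + 1))) (hu : u ∈ Icc (t i) (t (i + 1))) :
    ∃ x ∈ Icc (0:ℝ) 1, ∃ y ∈ Icc (0:ℝ) 1, s = T i x ∧ u = T i y ∧ |s - u| = r i * |x - y| := by
  rw [← hT.image_Icc hi] at hs hu
  obtain ⟨x, hx, rfl⟩ := hs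
  obtain ⟨y, hy, rfl⟩ := hu
  exact ⟨x, hx, y, hy, rfl, rfl, hT.dist_apply hi x y⟩

theorem pair_induction {Q : ℝ → ℝ → Prop} (symm : ∀ s u, Q s u → Q u s)
    (zoom : ∀ i < m, ∀ x ∈ Icc (0:ℝ) 1, ∀ y ∈ Icc (0:ℝ) 1, Q x y → Q (T i x) (T i y))
    (base : ∀ s ∈ Icc (0:ℝ) 1, ∀ u ∈ Icc (0:ℝ) 1, ∀ k ≤ m, s < t k → t k < u → Q s u)
    {s u : ℝ} (hs : s ∈ Icc (0:ℝ) 1) (hu : u ∈ Icc (0:ℝ) 1) (hsu : s ≠ u) : Q s u := by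
  obtain ⟨i₀, hi₀, hρ⟩ :=
    Finset.exists_max_image (Finset.range m) r ⟨0, Finset.mem_range.2 hT.1.1⟩
  obtain ⟨hρ0, hρ1, -⟩ := hT.1.2.1 i₀ (Finset.mem_range.1 hi₀)
  have separated : ∀ s ∈ Icc (0:ℝ) 1, ∀ u ∈ Icc (0:ℝ) 1, 0 < |s - u| →
      ¬ (∃ i < m, s ∈ Icc (t i) (t (i + 1)) ∧ u ∈ Icc (t i) (t (i + 1))) → Q s u := by
    intro s hs u hu hsu hc
    rcases (sub_ne_zero.1 (abs_pos.1 hsu)).lt_or_gt with h | h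
    · obtain ⟨k, hk, hsk, hku⟩ := hT.exists_vertex_between hs.1 h hu.2 hc
      exact base s hs u hu k hk hsk hku
    · obtain ⟨k, hk, huk, hks⟩ := hT.exists_vertex_between hu.1 h hs.2
        fun ⟨i, hi, hui, hsi⟩ => hc ⟨i, hi, hsi, hui⟩
      exact symm _ _ (base u hu s hs k hk huk hks)
  have key : ∀ n : ℕ, ∀ s ∈ Icc (0:ℝ) 1, ∀ u ∈ Icc (0:ℝ) 1, r i₀ ^ n ≤ |s - u| → Q s u := by
    intro n
    induction n with
    | zero =>
      intro s hs u hu hn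
      refine separated s hs u hu (one_pos.trans_le hn) fun ⟨i, hi, hsi, hui⟩ => ?_
      obtain ⟨x, hx, y, hy, -, -, hxy⟩ := hT.exists_eq_apply_of_mem_Icc hi hsi hui
      obtain ⟨hr0, hr1, -⟩ := hT.1.2.1 i hi
      have hxy1 : |x - y| ≤ 1 :=
        abs_sub_le_iff.2 ⟨by linarith [hx.2, hy.1], by linarith [hx.1, hy.2]⟩
      rw [pow_zero, hxy] at hn
      linarith [mul_le_of_le_one_right hr0.le hxy1]
    | succ n ih =>
      intro s hs u hu hn
      by_cases hc : ∃ i < m, s ∈ Icc (t i) (t (i + 1)) ∧ u ∈ Icc (t i) (t (i + 1))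
      · obtain ⟨i, hi, hsi, hui⟩ := hc
        obtain ⟨x, hx, y, hy, rfl, rfl, hxy⟩ := hT.exists_eq_apply_of_mem_Icc hi hsi hui
        refine zoom i hi x hx y hy (ih x hx y hy (le_of_mul_le_mul_left ?_ hρ0))
        calc r i₀ * r i₀ ^ n = r i₀ ^ (n + 1) := (pow_succ' _ _).symm
          _ ≤ r i * |x - y| := hxy ▸ hn
          _ ≤ r i₀ * |x - y| :=
            mul_le_mul_of_nonneg_right (hρ i (Finset.mem_range.2 hi)) (abs_nonneg _)
      · exact separated s hs u hu ((pow_pos hρ0 _).trans_le hn) hc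
  obtain ⟨n, hn⟩ := exists_pow_lt_of_lt_one (abs_pos.2 (sub_ne_zero.2 hsu)) hρ1
  exact key n s hs u hu hn.le

lemma arcDiam_apply {X : Type*} [MetricSpace X] {S : ℕ → X → X} {p : ℕ → ℝ}
    (hS : IsSimilaritySystem m S p) {g : ℝ → X} (hg : ContinuousOn g (Icc 0 1))
    (hgS : ∀ i < m, ∀ x ∈ Icc (0:ℝ) 1, S i (g x) = g (T i x)) :
    ∀ i < m, ∀ x ∈ Icc (0:ℝ) 1, ∀ y ∈ Icc (0:ℝ) 1,
      arcDiam g (T i x) (T i y) = p i * arcDiam g x y := by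
  intro i hi x hx y hy
  have hconj : g '' (T i '' uIcc x y) = S i '' (g '' uIcc x y) := by
    rw [image_image, image_image]
    exact image_congr fun z hz => (hgS i hi z (uIcc_subset_Icc hx hy hz)).symm
  rw [arcDiam, arcDiam, ← hT.image_uIcc hi, hconj]
  exact diam_image_of_dist_eq (hS i hi).1 (hS i hi).2.2 (isBounded_image_uIcc hg hx hy)

section Comparison

variable {X Y : Type*} [PseudoMetricSpace X] [PseudoMetricSpace Y] {g₁ : ℝ → X} {g₂ : ℝ → Y}
  {p : ℕ → ℝ} {K : ℝ} (hp : ∀ i < m, 0 < p i)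
  (hg₁ : ContinuousOn g₁ (Icc 0 1)) (hg₂ : ContinuousOn g₂ (Icc 0 1))
  (h₁ : ∀ i < m, ∀ x ∈ Icc (0:ℝ) 1, ∀ y ∈ Icc (0:ℝ) 1,
    arcDiam g₁ (T i x) (T i y) = p i * arcDiam g₁ x y)
  (h₂ : ∀ i < m, ∀ x ∈ Icc (0:ℝ) 1, ∀ y ∈ Icc (0:ℝ) 1,
    arcDiam g₂ (T i x) (T i y) = p i * arcDiam g₂ x y)
  (hK : 0 ≤ K) (hKp : ∀ i < m, arcDiam g₂ 0 1 ≤ K * (p i * arcDiam g₁ 0 1))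
include hg₁ hg₂ h₁ hK hKp

lemma arcDiam_le_of_Icc_subset {i : ℕ} (hi : i < m) {s u : ℝ} (hs : s ∈ Icc (0:ℝ) 1)
    (hu : u ∈ Icc (0:ℝ) 1) (hsub : Icc (t i) (t (i + 1)) ⊆ uIcc s u) :
    arcDiam g₂ s u ≤ K * arcDiam g₁ s u := by
  have h0 : (0:ℝ) ∈ Icc (0:ℝ) 1 := left_mem_Icc.2 zero_le_one
  have h1 : (1:ℝ) ∈ Icc (0:ℝ) 1 := right_mem_Icc.2 zero_le_one
  have hchild : arcDiam g₁ (t i) (t (i + 1)) = p i * arcDiam g₁ 0 1 := by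
    rcases hT.apply_zero_one hi with ⟨hT0, hT1⟩ | ⟨hT0, hT1⟩
    · rw [← hT0, ← hT1, h₁ i hi 0 h0 1 h1]
    · rw [arcDiam_comm, ← hT0, ← hT1, h₁ i hi 0 h0 1 h1]
  calc arcDiam g₂ s u ≤ arcDiam g₂ 0 1 :=
        arcDiam_mono hg₂ h0 h1 (by rw [uIcc_of_le zero_le_one]; exact uIcc_subset_Icc hs hu)
    _ ≤ K * arcDiam g₁ (t i) (t (i + 1)) := hchild ▸ hKp i hi
    _ ≤ K * arcDiam g₁ s u := by
        gcongr
        exact arcDiam_mono hg₁ hs hu (by rwa [uIcc_of_le (hT.2.2.2 i hi).le])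

include hp h₂

lemma arcDiam_le_of_mem_vertices {s u : ℝ} (hs : s ∈ Icc (0:ℝ) 1) (hu : u ∈ Icc (0:ℝ) 1)
    (hsu : s ≠ u) (hv : s ∈ t '' Iic m ∨ u ∈ t '' Iic m) :
    arcDiam g₂ s u ≤ K * arcDiam g₁ s u := by
  revert hv
  refine hT.pair_induction (Q := fun s u => s ∈ t '' Iic m ∨ u ∈ t '' Iic m →
    arcDiam g₂ s u ≤ K * arcDiam g₁ s u) ?_ ?_ ?_ hs hu hsu
  · intro s u hQ hv
    rw [arcDiam_comm g₂, arcDiam_comm g₁]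
    exact hQ hv.symm
  · intro i hi x hx y hy hQ hv
    rw [h₁ i hi x hx y hy, h₂ i hi x hx y hy, mul_left_comm]
    exact mul_le_mul_of_nonneg_left (hQ (hv.imp (hT.mem_vertices_of_apply_mem hi hx)
      (hT.mem_vertices_of_apply_mem hi hy))) (hp i hi).le
  · have hmono := hT.strictMonoOn
    rintro s hs u hu k hk hsk hku (⟨j, hj, rfl⟩ | ⟨j, hj, rfl⟩)
    all_goals have hjm : j ≤ m := hj
    · have hjk : j < k := (hmono.lt_iff_lt hj hk).1 hsk
      refine hT.arcDiam_le_of_Icc_subset hg₁ hg₂ h₁ hK hKp (i := j) (by omega) hs hu ?_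
      rw [uIcc_of_lt (hsk.trans hku)]
      exact Icc_subset_Icc le_rfl
        ((hmono.monotoneOn (mem_Iic.2 (by omega)) (mem_Iic.2 hk) hjk).trans hku.le)
    · have hkj : k < j := (hmono.lt_iff_lt (mem_Iic.2 hk) hj).1 hku
      refine hT.arcDiam_le_of_Icc_subset hg₁ hg₂ h₁ hK hKp (i := k) (by omega) hs hu ?_
      rw [uIcc_of_lt (hsk.trans hku)]
      exact Icc_subset_Icc hsk.le (hmono.monotoneOn (mem_Iic.2 (by omega)) hj hkj)

lemma arcDiam_le_two_mul {s u : ℝ} (hs : s ∈ Icc (0:ℝ) 1) (hu : u ∈ Icc (0:ℝ) 1)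
    (hsu : s ≠ u) :
    arcDiam g₂ s u ≤ 2 * K * arcDiam g₁ s u := by
  refine hT.pair_induction (Q := fun s u => arcDiam g₂ s u ≤ 2 * K * arcDiam g₁ s u)
    ?_ ?_ ?_ hs hu hsu
  · intro s u hQ
    rwa [arcDiam_comm g₂, arcDiam_comm g₁]
  · intro i hi x hx y hy hQ
    rw [h₁ i hi x hx y hy, h₂ i hi x hx y hy, mul_left_comm]
    exact mul_le_mul_of_nonneg_left hQ (hp i hi).le
  · intro s hs u hu k hk hsk hku
    have hv : t k ∈ t '' Iic m := mem_image_of_mem t (mem_Iic.2 hk)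
    have hkI := hT.mem_Icc hk
    have hk_mem : t k ∈ uIcc s u := Icc_subset_uIcc ⟨hsk.le, hku.le⟩
    calc arcDiam g₂ s u ≤ arcDiam g₂ s (t k) + arcDiam g₂ (t k) u := arcDiam_le_add hg₂ hs hu hkI
      _ ≤ K * arcDiam g₁ s (t k) + K * arcDiam g₁ (t k) u :=
          add_le_add (hT.arcDiam_le_of_mem_vertices hp hg₁ hg₂ h₁ h₂ hK hKp hs hkI hsk.ne (.inr hv))
            (hT.arcDiam_le_of_mem_vertices hp hg₁ hg₂ h₁ h₂ hK hKp hkI hu hku.ne (.inl hv))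
      _ ≤ K * arcDiam g₁ s u + K * arcDiam g₁ s u := by
          gcongr
          · exact arcDiam_mono hg₁ hs hu (uIcc_subset_uIcc left_mem_uIcc hk_mem)
          · exact arcDiam_mono hg₁ hs hu (uIcc_subset_uIcc hk_mem right_mem_uIcc)
      _ = 2 * K * arcDiam g₁ s u := by ring

end Comparison

theorem exists_arcDiam_le {X Y : Type*} [MetricSpace X] [PseudoMetricSpace Y]
    {g₁ : ℝ → X} {g₂ : ℝ → Y} {p : ℕ → ℝ} (hp : ∀ i < m, 0 < p i)
    (hg₁ : ContinuousOn g₁ (Icc 0 1)) (hg₂ : ContinuousOn g₂ (Icc 0 1))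
    (h₁ : ∀ i < m, ∀ x ∈ Icc (0:ℝ) 1, ∀ y ∈ Icc (0:ℝ) 1,
      arcDiam g₁ (T i x) (T i y) = p i * arcDiam g₁ x y)
    (h₂ : ∀ i < m, ∀ x ∈ Icc (0:ℝ) 1, ∀ y ∈ Icc (0:ℝ) 1,
      arcDiam g₂ (T i x) (T i y) = p i * arcDiam g₂ x y)
    (h01 : g₁ 0 ≠ g₁ 1) :
    ∃ K ≥ 0, ∀ s ∈ Icc (0:ℝ) 1, ∀ u ∈ Icc (0:ℝ) 1, arcDiam g₂ s u ≤ K * arcDiam g₁ s u := by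
  obtain ⟨i₀, hi₀, hmin⟩ :=
    Finset.exists_min_image (Finset.range m) p ⟨0, Finset.mem_range.2 hT.1.1⟩
  have hc₁ : 0 < arcDiam g₁ 0 1 := (dist_pos.2 h01).trans_le
    (dist_le_arcDiam hg₁ (left_mem_Icc.2 zero_le_one) (right_mem_Icc.2 zero_le_one))
  have hc₀ : 0 < p i₀ * arcDiam g₁ 0 1 := mul_pos (hp i₀ (Finset.mem_range.1 hi₀)) hc₁
  set K := arcDiam g₂ 0 1 / (p i₀ * arcDiam g₁ 0 1)
  have hK : 0 ≤ K := div_nonneg (arcDiam_nonneg g₂ 0 1) hc₀.le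
  have hKp : ∀ i < m, arcDiam g₂ 0 1 ≤ K * (p i * arcDiam g₁ 0 1) := fun i hi => calc
    arcDiam g₂ 0 1 = K * (p i₀ * arcDiam g₁ 0 1) := (div_mul_cancel₀ _ hc₀.ne').symm
    _ ≤ K * (p i * arcDiam g₁ 0 1) := by
        gcongr
        exact hmin i (Finset.mem_range.2 hi)
  refine ⟨2 * K, by positivity, fun s hs u hu => ?_⟩
  rcases eq_or_ne s u with rfl | hsu
  · rw [arcDiam_self, arcDiam_self, mul_zero]
  · exact hT.arcDiam_le_two_mul hp hg₁ hg₂ h₁ h₂ hK hKp hs hu hsu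

end IsLinearZipper

lemma BoundedTurning.dist_le_of_arcDiam_le {X Y : Type*} [MetricSpace X] [PseudoMetricSpace Y]
    {γ : Set X} {M K : ℝ} (hγ : BoundedTurning γ M) {g : ℝ → X} (hg : IsArcParam γ g)
    {G : ℝ → Y} (hG : ContinuousOn G (Icc 0 1)) (hK : 0 ≤ K) {s u : ℝ}
    (hs : s ∈ Icc (0:ℝ) 1) (hu : u ∈ Icc (0:ℝ) 1) (hGg : arcDiam G s u ≤ K * arcDiam g s u) :
    dist (G s) (G u) ≤ K * M * dist (g s) (g u) := calc
  dist (G s) (G u) ≤ arcDiam G s u := dist_le_arcDiam hG hs hu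
  _ ≤ K * arcDiam g s u := hGg
  _ ≤ K * (M * dist (g s) (g u)) := mul_le_mul_of_nonneg_left (hγ.2 g hg s hs u hu) hK
  _ = K * M * dist (g s) (g u) := (mul_assoc _ _ _).symm

lemma IsArcParam.mapsTo {X : Type*} [MetricSpace X] {γ : Set X} {g : ℝ → X}
    (hg : IsArcParam γ g) : MapsTo g (Icc 0 1) γ :=
  hg.2.2 ▸ mapsTo_image g _

lemma IsArcParam.apply_zero_ne_one {X : Type*} [MetricSpace X] {γ : Set X} {g : ℝ → X}
    (hg : IsArcParam γ g) : g 0 ≠ g 1 :=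
  hg.2.1.ne (left_mem_Icc.2 zero_le_one) (right_mem_Icc.2 zero_le_one) zero_ne_one

lemma IsArcParam.comp {X Y : Type*} [MetricSpace X] [MetricSpace Y] {γ : Set X} {γ' : Set Y}
    {g : ℝ → X} {f : X → Y} (hg : IsArcParam γ g) (hf : IsHomeoOnto γ γ' f) :
    IsArcParam γ' (f ∘ g) :=
  ⟨hf.1.comp hg.1 hg.mapsTo, hf.2.1.comp hg.2.1 hg.mapsTo, by rw [image_comp, hg.2.2, hf.2.2]⟩

/-- Jordan zippers with equal signatures and equal similarity ratios, whose
attractors are arcs of bounded turning, are bi-Lipschitz isomorphic. -/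
theorem equal_ratios_biLipschitz {n : ℕ} (m : ℕ)
    (S S' : ℕ → EuclideanSpace ℝ (Fin n) → EuclideanSpace ℝ (Fin n)) (p q : ℕ → ℝ)
    (z z' : ℕ → EuclideanSpace ℝ (Fin n)) (ε : ℕ → ℕ)
    (γ γ' : Set (EuclideanSpace ℝ (Fin n)))
    (hS : IsJordanZipper m S p z ε γ) (hS' : IsJordanZipper m S' q z' ε γ')
    (hpq : ∀ i < m, p i = q i)
    (M M' : ℝ) (hγ : BoundedTurning γ M) (hγ' : BoundedTurning γ' M')
    (f : EuclideanSpace ℝ (Fin n) → EuclideanSpace ℝ (Fin n))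
    (hf : IsHomeoOnto γ γ' f) (hfa : Agrees m S S' γ f) :
    ∃ C ≥ (1:ℝ), ∀ x ∈ γ, ∀ y ∈ γ,
      C⁻¹ * dist x y ≤ dist (f x) (f y) ∧ dist (f x) (f y) ≤ C * dist x y := by
  obtain ⟨⟨-, hSsim, -, -⟩, -, T, r, t, g, hT, ⟨hgc, -, hgS⟩, hginj, hgγ⟩ := hS
  have hg : IsArcParam γ g := ⟨hgc, hginj, hgγ⟩
  have hG := hg.comp hf
  have hGS : ∀ i < m, ∀ x ∈ Icc (0:ℝ) 1, S' i (f (g x)) = f (g (T i x)) := fun i hi x hx => by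
    rw [← hgS i hi x hx, hfa i hi (g x) (hg.mapsTo hx)]
  have hp : ∀ i < m, 0 < p i := fun i hi => (hSsim i hi).1
  have h₁ := hT.arcDiam_apply hSsim hgc hgS
  have h₂ := hT.arcDiam_apply (fun i hi => hpq i hi ▸ hS'.1.2.1 i hi) hG.1 hGS
  obtain ⟨K, hK, hGg⟩ := hT.exists_arcDiam_le hp hgc hG.1 h₁ h₂ hg.apply_zero_ne_one
  obtain ⟨K', hK', hgG⟩ := hT.exists_arcDiam_le hp hG.1 hgc h₂ h₁ hG.apply_zero_ne_one
  refine ⟨max 1 (max (K * M) (K' * M')), le_max_left _ _, ?_⟩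
  rw [← hgγ]
  rintro _ ⟨s, hs, rfl⟩ _ ⟨u, hu, rfl⟩
  have upper := hγ.dist_le_of_arcDiam_le hg hG.1 hK hs hu (hGg s hs u hu)
  have lower := hγ'.dist_le_of_arcDiam_le hG hgc hK' hs hu (hgG s hs u hu)
  constructor
  · rw [inv_mul_le_iff₀ (by positivity)]
    exact lower.trans
      (mul_le_mul_of_nonneg_right (le_max_of_le_right (le_max_right _ _)) dist_nonneg)
  · exact upper.trans
      (mul_le_mul_of_nonneg_right (le_max_of_le_right (le_max_left _ _)) dist_nonneg)
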